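/- On Schwartz functions on ℝⁿ with values in Λ*_ℂ(ℝⁿ), let D₁ := Σ_k γ̂_k ∂_k (with γ̂_k = ε_k − ε_k*) and let c₊(f) := Σ_k x_k γ̌_k (Clifford multiplication by the position vector, with γ̌_k = ε_k + ε_k*). Then the anticommutator D₁ c₊(f) + c₊(f) D₁ equals the operator acting as multiplication by (2p − n) on p-forms, i.e. Σ_p (2p − n) id on the degree-p component. -/

import Mathlib

/-!
Each `γ̂_j` anticommutes with every `γ̌_k`, so after the product rule
`∂_j (c₊(f) ω) = γ̌_j ω + c₊(f) ∂_j ω` all first-order terms of `D₁ c₊(f) + c₊(f) D₁` cancel,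
leaving `Σ_k γ̂_k γ̌_k = Σ_k (ε_k ε_k* - ε_k* ε_k)`. On `e_T` the `k`-th summand is `+1` for
`k ∈ T` and `-1` otherwise, which sums to `2 |T| - n`.
-/

open Finset

/-- Model of the complexified exterior algebra of an `n`-dimensional real inner
product space with a chosen orthonormal basis: the Hilbert space with orthonormal
basis indexed by subsets `S ⊆ {1,…,n}`, the basis vector for `S = {i₁<…<i_p}`
corresponding to `e_{i₁} ∧ … ∧ e_{i_p}`. -/
abbrev ExtAlg (n : ℕ) := EuclideanSpace ℂ (Finset (Fin n))

/-- Exterior multiplication on the left by the `k`-th orthonormal basis vector. -/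
noncomputable def eps (n : ℕ) (k : Fin n) : ExtAlg n →ₗ[ℂ] ExtAlg n where
  toFun f := WithLp.toLp 2 (fun T : Finset (Fin n) => if k ∈ T then
      (-1 : ℂ) ^ (((T.erase k).filter (· < k)).card) * f (T.erase k) else 0)
  map_add' f g := by
    ext T
    by_cases h : k ∈ T <;> simp [h, PiLp.add_apply, mul_add]
  map_smul' c f := by
    ext T
    by_cases h : k ∈ T <;> simp [h, PiLp.smul_apply, smul_eq_mul] <;> ring

/-- The adjoint of `eps` with respect to the canonical Hermitian inner product. -/
noncomputable def epsStar (n : ℕ) (k : Fin n) : ExtAlg n →ₗ[ℂ] ExtAlg n :=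
  LinearMap.adjoint (eps n k)

/-- `γ̂_k = ε_k − ε_k*`. -/
noncomputable def gammaHat (n : ℕ) (k : Fin n) : ExtAlg n →ₗ[ℂ] ExtAlg n :=
  eps n k - epsStar n k

/-- `γ̌_k = ε_k + ε_k*`. -/
noncomputable def gammaCheck (n : ℕ) (k : Fin n) : ExtAlg n →ₗ[ℂ] ExtAlg n :=
  eps n k + epsStar n k

/-- The operator acting as multiplication by `2p − n` on the degree-`p` component. -/
noncomputable def degreeOp (n : ℕ) : ExtAlg n →ₗ[ℂ] ExtAlg n where
  toFun f := WithLp.toLp 2 (fun T : Finset (Fin n) => ((2 * T.card : ℂ) - (n : ℂ)) * f T)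
  map_add' f g := by ext T; simp [PiLp.add_apply, mul_add]
  map_smul' c f := by ext T; simp [PiLp.smul_apply, smul_eq_mul]; ring

/-- The Dirac operator `D₁ = Σ_k γ̂_k ∂_k` on functions `ℝⁿ → Λ*_ℂ(ℝⁿ)`. -/
noncomputable def diracOp (n : ℕ) (u : EuclideanSpace ℝ (Fin n) → ExtAlg n) :
    EuclideanSpace ℝ (Fin n) → ExtAlg n :=
  fun x => ∑ k : Fin n, gammaHat n k (fderiv ℝ u x (EuclideanSpace.single k 1))

/-- Clifford multiplication by the position vector, `c₊(f) = Σ_k x_k γ̌_k`. -/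
noncomputable def positionCliff (n : ℕ) (u : EuclideanSpace ℝ (Fin n) → ExtAlg n) :
    EuclideanSpace ℝ (Fin n) → ExtAlg n :=
  fun x => ∑ k : Fin n, ((x k : ℂ)) • gammaCheck n k (u x)

namespace ExtAlg

variable {n : ℕ}

/-- The sign of moving `e_k` past the factors `e_i`, `i < k`, of `e_T`. -/
noncomputable def wedgeSign (k : Fin n) (T : Finset (Fin n)) : ℂ := (-1) ^ #{i ∈ T | i < k}

lemma wedgeSign_erase_of_not_lt {j k : Fin n} (h : ¬ j < k) (T : Finset (Fin n)) :
    wedgeSign k (T.erase j) = wedgeSign k T := by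
  rw [wedgeSign, wedgeSign, filter_erase, erase_eq_of_notMem (by simp [h])]

lemma wedgeSign_insert_of_not_lt {j k : Fin n} (h : ¬ j < k) (T : Finset (Fin n)) :
    wedgeSign k (insert j T) = wedgeSign k T := by
  rw [wedgeSign, wedgeSign, filter_insert, if_neg h]

lemma wedgeSign_erase_of_lt {j k : Fin n} (h : j < k) {T : Finset (Fin n)} (hj : j ∈ T) :
    wedgeSign k (T.erase j) = -wedgeSign k T := by
  rw [wedgeSign, wedgeSign, filter_erase, ← card_erase_add_one (mem_filter.mpr ⟨hj, h⟩),
    pow_succ, mul_neg_one, neg_neg]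

lemma wedgeSign_insert_of_lt {j k : Fin n} (h : j < k) {T : Finset (Fin n)} (hj : j ∉ T) :
    wedgeSign k (insert j T) = -wedgeSign k T := by
  rw [← neg_neg (wedgeSign k (insert j T)), ← wedgeSign_erase_of_lt h (mem_insert_self j T),
    erase_insert hj]

lemma wedgeSign_mul_self (k : Fin n) (T : Finset (Fin n)) : wedgeSign k T * wedgeSign k T = 1 := by
  rw [wedgeSign, ← pow_add, Even.neg_one_pow ⟨_, rfl⟩]

lemma conj_wedgeSign (k : Fin n) (T : Finset (Fin n)) :
    (starRingEnd ℂ) (wedgeSign k T) = wedgeSign k T := by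
  simp [wedgeSign]

lemma eps_apply (k : Fin n) (f : ExtAlg n) (T : Finset (Fin n)) :
    eps n k f T = if k ∈ T then wedgeSign k T * f (T.erase k) else 0 := by
  simp only [eps, LinearMap.coe_mk, AddHom.coe_mk]
  rw [← wedgeSign, wedgeSign_erase_of_not_lt (lt_irrefl k)]

lemma eps_single (k : Fin n) (T : Finset (Fin n)) (a : ℂ) :
    eps n k (EuclideanSpace.single T a) =
      if k ∈ T then 0 else wedgeSign k T • EuclideanSpace.single (insert k T) a := by
  ext S
  by_cases hT : k ∈ T
  · have hne : S.erase k ≠ T := fun h => notMem_erase k S (h ▸ hT)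
    simp [eps_apply, hT, hne]
  by_cases hS : k ∈ S
  · have hiff : S.erase k = T ↔ S = insert k T :=
      ⟨fun h => h ▸ (insert_erase hS).symm, fun h => h ▸ erase_insert hT⟩
    simp only [eps_apply, hS, hT, hiff, if_true, if_false, PiLp.smul_apply, PiLp.single_apply,
      smul_eq_mul, mul_ite, mul_zero]
    split_ifs with h
    · rw [h, wedgeSign_insert_of_not_lt (lt_irrefl k)]
    · rfl
  · have hne : S ≠ insert k T := fun h => hS (h ▸ mem_insert_self k T)
    simp [eps_apply, hS, hT, hne]

lemma epsStar_apply (k : Fin n) (f : ExtAlg n) (T : Finset (Fin n)) :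
    epsStar n k f T = if k ∈ T then 0 else wedgeSign k T * f (insert k T) := by
  -- `f T = ⟪e_T, f⟫`, and `⟪e_T, ε_k* f⟫ = ⟪ε_k e_T, f⟫` is read off from `eps_single`.
  rw [← one_mul (epsStar n k f T), ← map_one (starRingEnd ℂ), ← EuclideanSpace.inner_single_left,
    epsStar, LinearMap.adjoint_inner_right, eps_single]
  split_ifs <;> simp [inner_smul_left, EuclideanSpace.inner_single_left, conj_wedgeSign]

lemma wedgeSign_mul_wedgeSign_erase {j k : Fin n} (hjk : j ≠ k) {T : Finset (Fin n)}
    (hj : j ∈ T) (hk : k ∈ T) :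
    wedgeSign j T * wedgeSign k (T.erase j) = -(wedgeSign k T * wedgeSign j (T.erase k)) := by
  rcases hjk.lt_or_gt with h | h
  · rw [wedgeSign_erase_of_lt h hj, wedgeSign_erase_of_not_lt (asymm h)]; ring
  · rw [wedgeSign_erase_of_lt h hk, wedgeSign_erase_of_not_lt (asymm h)]; ring

lemma wedgeSign_mul_wedgeSign_insert {j k : Fin n} (hjk : j ≠ k) {T : Finset (Fin n)}
    (hj : j ∈ T) (hk : k ∉ T) :
    wedgeSign j T * wedgeSign k (T.erase j) = -(wedgeSign k T * wedgeSign j (insert k T)) := by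
  rcases hjk.lt_or_gt with h | h
  · rw [wedgeSign_erase_of_lt h hj, wedgeSign_insert_of_not_lt (asymm h)]; ring
  · rw [wedgeSign_erase_of_not_lt (asymm h), wedgeSign_insert_of_lt h hk]; ring

lemma eps_mul_self (k : Fin n) : eps n k * eps n k = 0 := by
  refine LinearMap.ext fun f => ?_
  ext T
  by_cases h : k ∈ T <;> simp [eps_apply, h]

lemma eps_mul_eps_add_of_ne {j k : Fin n} (hjk : j ≠ k) :
    eps n j * eps n k + eps n k * eps n j = 0 := by
  refine LinearMap.ext fun f => ?_
  ext T
  by_cases hj : j ∈ T <;> by_cases hk : k ∈ T <;>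
    simp [eps_apply, hj, hk, hjk, hjk.symm]
  rw [erase_right_comm]
  linear_combination f ((T.erase k).erase j) * wedgeSign_mul_wedgeSign_erase hjk hj hk

lemma eps_mul_epsStar_add_of_ne {j k : Fin n} (hjk : j ≠ k) :
    eps n j * epsStar n k + epsStar n k * eps n j = 0 := by
  refine LinearMap.ext fun f => ?_
  ext T
  by_cases hj : j ∈ T <;> by_cases hk : k ∈ T <;>
    simp [eps_apply, epsStar_apply, hj, hk, hjk, hjk.symm]
  rw [erase_insert_of_ne hjk.symm]
  linear_combination f (insert k (T.erase j)) * wedgeSign_mul_wedgeSign_insert hjk hj hk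

lemma epsStar_eq_star (k : Fin n) : epsStar n k = star (eps n k) :=
  (LinearMap.star_eq_adjoint _).symm

lemma epsStar_mul_self (k : Fin n) : epsStar n k * epsStar n k = 0 := by
  rw [epsStar_eq_star, ← star_mul, eps_mul_self, star_zero]

lemma epsStar_mul_epsStar_add_of_ne {j k : Fin n} (hjk : j ≠ k) :
    epsStar n j * epsStar n k + epsStar n k * epsStar n j = 0 := by
  rw [epsStar_eq_star, epsStar_eq_star, ← star_mul, ← star_mul, ← star_add, add_comm,
    eps_mul_eps_add_of_ne hjk, star_zero]

lemma eps_mul_epsStar_self_apply (k : Fin n) (f : ExtAlg n) (T : Finset (Fin n)) :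
    (eps n k * epsStar n k) f T = if k ∈ T then f T else 0 := by
  by_cases h : k ∈ T <;>
    simp [eps_apply, epsStar_apply, h, ← mul_assoc, wedgeSign_erase_of_not_lt (lt_irrefl k),
      wedgeSign_mul_self]

lemma epsStar_mul_eps_self_apply (k : Fin n) (f : ExtAlg n) (T : Finset (Fin n)) :
    (epsStar n k * eps n k) f T = if k ∈ T then 0 else f T := by
  by_cases h : k ∈ T <;>
    simp [eps_apply, epsStar_apply, h, ← mul_assoc, wedgeSign_insert_of_not_lt (lt_irrefl k),
      wedgeSign_mul_self]

lemma gammaHat_mul_gammaCheck_self (k : Fin n) :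
    gammaHat n k * gammaCheck n k = eps n k * epsStar n k - epsStar n k * eps n k := by
  rw [gammaHat, gammaCheck, sub_mul, mul_add, mul_add, eps_mul_self, epsStar_mul_self]
  abel

lemma gammaCheck_mul_gammaHat_self (k : Fin n) :
    gammaCheck n k * gammaHat n k = epsStar n k * eps n k - eps n k * epsStar n k := by
  rw [gammaHat, gammaCheck, add_mul, mul_sub, mul_sub, eps_mul_self, epsStar_mul_self]
  abel

lemma gammaHat_mul_gammaCheck_add (j k : Fin n) :
    gammaHat n j * gammaCheck n k + gammaCheck n k * gammaHat n j = 0 := by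
  rcases eq_or_ne j k with rfl | hjk
  · rw [gammaHat_mul_gammaCheck_self, gammaCheck_mul_gammaHat_self]
    abel
  calc gammaHat n j * gammaCheck n k + gammaCheck n k * gammaHat n j
      = (eps n j * eps n k + eps n k * eps n j)
        - (epsStar n j * epsStar n k + epsStar n k * epsStar n j)
        + (eps n j * epsStar n k + epsStar n k * eps n j)
        - (eps n k * epsStar n j + epsStar n j * eps n k) := by
        simp only [gammaHat, gammaCheck, mul_add, add_mul, mul_sub, sub_mul]
        abel
    _ = 0 := by
      rw [eps_mul_eps_add_of_ne hjk, epsStar_mul_epsStar_add_of_ne hjk,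
        eps_mul_epsStar_add_of_ne hjk, eps_mul_epsStar_add_of_ne hjk.symm]
      simp

lemma sum_gammaHat_mul_gammaCheck_self : ∑ k, gammaHat n k * gammaCheck n k = degreeOp n := by
  refine LinearMap.ext fun f => ?_
  ext T
  have hterm (k : Fin n) : (gammaHat n k * gammaCheck n k) f T
      = 2 * (if k ∈ T then f T else 0) - f T := by
    rw [gammaHat_mul_gammaCheck_self, LinearMap.sub_apply, PiLp.sub_apply,
      eps_mul_epsStar_self_apply, epsStar_mul_eps_self_apply]
    split_ifs <;> ring
  simp only [LinearMap.sum_apply, WithLp.ofLp_sum, Finset.sum_apply, hterm, sum_sub_distrib,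
    ← mul_sum, sum_ite_mem, univ_inter, sum_const, card_univ, Fintype.card_fin, nsmul_eq_mul]
  simp only [degreeOp, LinearMap.coe_mk, AddHom.coe_mk]
  ring

lemma gammaHat_positionCliff (j : Fin n) (u : EuclideanSpace ℝ (Fin n) → ExtAlg n)
    (x : EuclideanSpace ℝ (Fin n)) :
    gammaHat n j (positionCliff n u x) = -positionCliff n (fun y => gammaHat n j (u y)) x := by
  simp only [positionCliff, map_sum, map_smul, ← sum_neg_distrib, ← smul_neg]
  refine sum_congr rfl fun k _ => congrArg _ (eq_neg_of_add_eq_zero_left ?_)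
  simpa using congrArg (fun A => A (u x)) (gammaHat_mul_gammaCheck_add j k)

lemma positionCliff_sum {ι : Type*} (s : Finset ι) (u : ι → EuclideanSpace ℝ (Fin n) → ExtAlg n)
    (x : EuclideanSpace ℝ (Fin n)) :
    positionCliff n (fun y => ∑ i ∈ s, u i y) x = ∑ i ∈ s, positionCliff n (u i) x := by
  simp only [positionCliff, map_sum, smul_sum]
  exact sum_comm

lemma hasFDerivAt_positionCliff {u : EuclideanSpace ℝ (Fin n) → ExtAlg n}
    {u' : EuclideanSpace ℝ (Fin n) →L[ℝ] ExtAlg n} {x : EuclideanSpace ℝ (Fin n)}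
    (hu : HasFDerivAt u u' x) :
    HasFDerivAt (positionCliff n u)
      (∑ k, ((x k : ℂ) • ((gammaCheck n k).toContinuousLinearMap.restrictScalars ℝ).comp u'
        + (Complex.ofRealCLM.comp (EuclideanSpace.proj k)).smulRight (gammaCheck n k (u x)))) x :=
  HasFDerivAt.fun_sum fun k _ => (Complex.ofRealCLM.comp (EuclideanSpace.proj k)).hasFDerivAt.smul
      (((gammaCheck n k).toContinuousLinearMap.restrictScalars ℝ).hasFDerivAt.comp x hu)

lemma fderiv_positionCliff_single {u : EuclideanSpace ℝ (Fin n) → ExtAlg n}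
    {x : EuclideanSpace ℝ (Fin n)} (hu : DifferentiableAt ℝ u x) (j : Fin n) :
    fderiv ℝ (positionCliff n u) x (EuclideanSpace.single j 1)
      = gammaCheck n j (u x)
        + positionCliff n (fun y => fderiv ℝ u y (EuclideanSpace.single j 1)) x := by
  rw [(hasFDerivAt_positionCliff hu.hasFDerivAt).fderiv]
  simp [positionCliff, sum_add_distrib, add_comm]

lemma diracOp_positionCliff_add_positionCliff_diracOp {u : EuclideanSpace ℝ (Fin n) → ExtAlg n}
    {x : EuclideanSpace ℝ (Fin n)} (hu : DifferentiableAt ℝ u x) :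
    diracOp n (positionCliff n u) x + positionCliff n (diracOp n u) x
      = ∑ k, (gammaHat n k * gammaCheck n k) (u x) := by
  have hcD : positionCliff n (diracOp n u) x = ∑ j,
      positionCliff n (fun y => gammaHat n j (fderiv ℝ u y (EuclideanSpace.single j 1))) x :=
    positionCliff_sum univ _ x
  rw [hcD]
  simp only [diracOp, fderiv_positionCliff_single hu, map_add, gammaHat_positionCliff,
    sum_add_distrib, sum_neg_distrib, neg_add_cancel_right, Module.End.mul_apply]

end ExtAlg

/-- The anticommutator `[D₁, c₊(f)]₊` equals multiplication by `2p − n` on `p`-forms. -/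
theorem anticommutator_dirac_positionCliff (n : ℕ)
    (ω : SchwartzMap (EuclideanSpace ℝ (Fin n)) (ExtAlg n))
    (x : EuclideanSpace ℝ (Fin n)) :
    diracOp n (positionCliff n ω) x + positionCliff n (diracOp n ω) x
      = degreeOp n (ω x) := by
  rw [ExtAlg.diracOp_positionCliff_add_positionCliff_diracOp ω.differentiableAt,
    ← LinearMap.sum_apply, ExtAlg.sum_gammaHat_mul_gammaCheck_self]
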